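/- arXiv:1510.04115 — 3 statements merged into one kernel-verified Lean document; each statement's English description precedes it below -/
import Mathlib

section
/- Let r > 0, let a be a finite signed measure on [-r, 0], and let θ ∈ ℝ. Then for every c ∈ ℝ, the set {λ ∈ ℂ : h_θ(λ) = 0 and Re(λ) ≥ c} is finite, where h_θ(λ) = λ - θ ∫_{[-r,0]} e^{λu} a(du). -/
/-!
Since the integral runs over the compact interval `[-r, 0]`, `h_θ` is entire. On `Re λ ≥ c` we have
`|e^{λu}| ≤ e^{|c| r}` for `u ∈ [-r, 0]`, so a zero satisfies
`|λ| = |θ| |∫ e^{λu} a(du)| ≤ |θ| e^{|c| r} |a|([-r, 0])`; the same bound shows that `h_θ` does not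
vanish at large positive reals. Hence these zeros lie in a compact disc, where a nonzero entire
function has only finitely many zeros.
-/

open MeasureTheory Set Filter

/-- Integral of a complex-valued function on a set against a finite signed measure,
defined via the Jordan decomposition. -/
noncomputable def cInt (a : SignedMeasure ℝ) (s : Set ℝ) (f : ℝ → ℂ) : ℂ :=
  (∫ x in s, f x ∂a.toJordanDecomposition.posPart) -
  (∫ x in s, f x ∂a.toJordanDecomposition.negPart)

/-- The characteristic function `h_θ(z) = z - θ ∫_{[-r,0]} e^{zu} a(du)`. -/
noncomputable def hChar (r θ : ℝ) (a : SignedMeasure ℝ) (z : ℂ) : ℂ :=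
  z - (θ : ℂ) * cInt a (Icc (-r) 0) (fun u => Complex.exp (z * (u : ℂ)))

open ProbabilityTheory Complex

theorem AnalyticOnNhd.finite_zeros_inter_of_isCompact {𝕜 E : Type*} [NontriviallyNormedField 𝕜]
    [NormedAddCommGroup E] [NormedSpace 𝕜 E] {f : 𝕜 → E} {U K : Set 𝕜}
    (hf : AnalyticOnNhd 𝕜 f U) (hU : IsPreconnected U) {w : 𝕜} (hwU : w ∈ U) (hw : f w ≠ 0)
    (hK : IsCompact K) (hKU : K ⊆ U) : (K ∩ f ⁻¹' {0}).Finite := by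
  have hcod : {z | f z ≠ 0} ∈ codiscreteWithin K :=
    codiscreteWithin_mono hKU <|
      (hf.eqOn_zero_or_eventually_ne_zero_of_preconnected hU).resolve_left fun h ↦ hw (h hwU)
  exact (hK.finite_sdiff_of_mem_codiscreteWithin hcod).subset fun z ⟨hzK, hz⟩ ↦
    ⟨hzK, not_not.mpr hz⟩

theorem integrableExpSet_id_restrict_eq_univ (μ : Measure ℝ) [IsLocallyFiniteMeasure μ]
    {K : Set ℝ} (hK : IsCompact K) : integrableExpSet id (μ.restrict K) = univ :=
  eq_univ_of_forall fun _ ↦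
    (continuous_const.mul continuous_id).rexp.continuousOn.integrableOn_compact hK

theorem differentiable_setIntegral_cexp_mul (μ : Measure ℝ) [IsLocallyFiniteMeasure μ]
    {K : Set ℝ} (hK : IsCompact K) :
    Differentiable ℂ fun z : ℂ ↦ ∫ x in K, cexp (z * x) ∂μ := by
  have h := differentiableOn_complexMGF (X := id) (μ := μ.restrict K)
  simp only [integrableExpSet_id_restrict_eq_univ μ hK, interior_univ, mem_univ, ofPred_true]
    at h
  exact differentiableOn_univ.mp h

theorem differentiable_cInt_cexp_mul (a : SignedMeasure ℝ) {K : Set ℝ} (hK : IsCompact K) :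
    Differentiable ℂ fun z : ℂ ↦ cInt a K fun u ↦ cexp (z * u) :=
  (differentiable_setIntegral_cexp_mul _ hK).sub (differentiable_setIntegral_cexp_mul _ hK)

theorem norm_cInt_le (a : SignedMeasure ℝ) {s : Set ℝ} {f : ℝ → ℂ} {C : ℝ}
    (hC : ∀ x ∈ s, ‖f x‖ ≤ C) : ‖cInt a s f‖ ≤ C * a.totalVariation.real s := by
  rw [SignedMeasure.totalVariation, measureReal_add_apply, mul_add]
  exact (norm_sub_le _ _).trans <| add_le_add
    (norm_setIntegral_le_of_norm_le_const (measure_lt_top _ _) hC)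
    (norm_setIntegral_le_of_norm_le_const (measure_lt_top _ _) hC)

theorem norm_cexp_mul_le_of_mem_Icc {r c x : ℝ} {z : ℂ} (hz : c ≤ z.re) (hx : x ∈ Icc (-r) 0) :
    ‖cexp (z * x)‖ ≤ Real.exp (|c| * r) := by
  rw [norm_exp, re_mul_ofReal, Real.exp_le_exp]
  obtain ⟨hrx, hx0⟩ := hx
  calc z.re * x ≤ c * x := mul_le_mul_of_nonpos_right hz hx0
    _ ≤ |c| * |x| := (le_abs_self _).trans (abs_mul _ _).le
    _ ≤ |c| * r :=
      mul_le_mul_of_nonneg_left (abs_le.mpr ⟨by linarith, by linarith⟩) (abs_nonneg c)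

theorem differentiable_hChar (r θ : ℝ) (a : SignedMeasure ℝ) : Differentiable ℂ (hChar r θ a) :=
  differentiable_id.sub <| (differentiable_const _).mul <|
    differentiable_cInt_cexp_mul a isCompact_Icc

theorem norm_le_of_hChar_eq_zero {r θ c : ℝ} {a : SignedMeasure ℝ} {z : ℂ}
    (hz : hChar r θ a z = 0) (hc : c ≤ z.re) :
    ‖z‖ ≤ |θ| * (Real.exp (|c| * r) * a.totalVariation.real (Icc (-r) 0)) := by
  rw [hChar, sub_eq_zero] at hz
  rw [hz, norm_mul, norm_real, Real.norm_eq_abs]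
  exact mul_le_mul_of_nonneg_left
    (norm_cInt_le a fun x hx ↦ norm_cexp_mul_le_of_mem_Icc hc hx) (abs_nonneg θ)

theorem exists_hChar_ne_zero (r θ : ℝ) (a : SignedMeasure ℝ) : ∃ w, hChar r θ a w ≠ 0 := by
  set M := |θ| * a.totalVariation.real (Icc (-r) 0)
  have hM : 0 ≤ M := by positivity
  refine ⟨(M + 1 : ℝ), fun h ↦ ?_⟩
  have := norm_le_of_hChar_eq_zero h (c := 0) (by rw [ofReal_re]; linarith)
  rw [norm_real, Real.norm_eq_abs, abs_of_pos (by linarith)] at this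
  simp only [abs_zero, zero_mul, Real.exp_zero, one_mul] at this
  linarith

theorem characteristic_zeros_re_ge_finite_general (r : ℝ) (a : SignedMeasure ℝ) (θ : ℝ) (c : ℝ) :
    {l : ℂ | hChar r θ a l = 0 ∧ c ≤ l.re}.Finite := by
  obtain ⟨w, hw⟩ := exists_hChar_ne_zero r θ a
  have hanalytic : AnalyticOnNhd ℂ (hChar r θ a) univ :=
    (differentiable_hChar r θ a).differentiableOn.analyticOnNhd isOpen_univ
  set R := |θ| * (Real.exp (|c| * r) * a.totalVariation.real (Icc (-r) 0))
  have hzeros : {l : ℂ | hChar r θ a l = 0 ∧ c ≤ l.re} ⊆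
      Metric.closedBall 0 R ∩ hChar r θ a ⁻¹' {0} := fun z ⟨hz, hc⟩ ↦
    ⟨mem_closedBall_zero_iff.mpr (norm_le_of_hChar_eq_zero hz hc), hz⟩
  exact (hanalytic.finite_zeros_inter_of_isCompact isPreconnected_univ (mem_univ w) hw
    (isCompact_closedBall 0 R) (subset_univ _)).subset hzeros

/-- For every `c ∈ ℝ`, the set of zeros of the characteristic function with real part
at least `c` is finite. -/
theorem characteristic_zeros_re_ge_finite (r : ℝ) (hr : 0 < r) (a : SignedMeasure ℝ)
    (ha : a.totalVariation (Icc (-r) 0)ᶜ = 0) (θ : ℝ) (c : ℝ) :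
    {l : ℂ | hChar r θ a l = 0 ∧ c ≤ l.re}.Finite :=
  characteristic_zeros_re_ge_finite_general r a θ c
end

section
/- Let r > 0, let a be a finite signed measure on [-r, 0], and let θ ∈ ℝ. Suppose x : [0, ∞) → ℝ is continuous, satisfies x(t) = 1 + θ ∫_0^t ∫_{[-r,0]} x̃(s+u) a(du) ds for all t ≥ 0 (where x̃ extends x by 0 on (-∞, 0)), and satisfies |x(t)| ≤ C e^{ct} for all t ≥ 0, for some constants C > 0 and c ∈ ℝ. Then for every λ ∈ ℂ with Re(λ) > c, one has h_θ(λ) ≠ 0 and ∫_0^∞ e^{-λt} x(t) dt = 1 / h_θ(λ), where h_θ(λ) = λ - θ ∫_{[-r,0]} e^{λu} a(du). -/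
open MeasureTheory Set Filter intervalIntegral

/-- Integral of a real-valued function on a set against a finite signed measure,
defined via the Jordan decomposition. -/
noncomputable def sInt (a : SignedMeasure ℝ) (s : Set ℝ) (f : ℝ → ℝ) : ℝ :=
  (∫ x in s, f x ∂a.toJordanDecomposition.posPart) -
  (∫ x in s, f x ∂a.toJordanDecomposition.negPart)

/-!
Write `x(t) = 1 + θ ∫₀ᵗ g` with `g(s) = ∫ x(s + u) a(du)`, and let `X` be the Laplace transform
of `x`. Transforming an antiderivative gives `λ X = 1 + θ ĝ(λ)`: on `[0, T]` this is Fubini over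
the triangle `s ≤ t`, and the boundary term `e^{-λT} x(T)` vanishes as `T → ∞` by the growth
bound. Since `x` vanishes on `(-∞, 0)`, each delay `s ↦ x(s + u)` with `u ≤ 0` has transform
`e^{λu} X`, so Fubini in `u` gives `ĝ(λ) = (∫ e^{λu} a(du)) X`. Hence `h_θ(λ) X = 1`.
-/

open scoped Topology Complex

noncomputable def laplace (f : ℝ → ℂ) (l : ℂ) : ℂ :=
  ∫ t in Ioi (0 : ℝ), cexp (-(l * t)) * f t

section ExponentialBound

variable {f : ℝ → ℂ} {C c : ℝ} {l : ℂ}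

lemma norm_cexp_neg_mul_ofReal (l : ℂ) (t : ℝ) : ‖cexp (-(l * t))‖ = Real.exp (-(l.re * t)) := by
  simp [Complex.norm_exp, Complex.mul_re]

lemma norm_cexp_neg_mul_mul_le {t : ℝ} (hf : ‖f t‖ ≤ C * Real.exp (c * t)) :
    ‖cexp (-(l * t)) * f t‖ ≤ C * Real.exp ((c - l.re) * t) := by
  rw [norm_mul, norm_cexp_neg_mul_ofReal]
  calc Real.exp (-(l.re * t)) * ‖f t‖ ≤ Real.exp (-(l.re * t)) * (C * Real.exp (c * t)) := by
        gcongr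
    _ = C * Real.exp ((c - l.re) * t) := by rw [mul_left_comm, ← Real.exp_add]; ring_nf

lemma integrableOn_Ioi_mul_exp_sub_mul (hl : c < l.re) (C : ℝ) :
    IntegrableOn (fun t => C * Real.exp ((c - l.re) * t)) (Ioi 0) := by
  simpa [neg_sub, IntegrableOn] using (exp_neg_integrableOn_Ioi 0 (sub_pos.mpr hl)).const_mul C

lemma integrableOn_cexp_neg_mul_mul (hf : AEStronglyMeasurable f (volume.restrict (Ioi 0)))
    (hbd : ∀ t, ‖f t‖ ≤ C * Real.exp (c * t)) (hl : c < l.re) :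
    IntegrableOn (fun t : ℝ => cexp (-(l * t)) * f t) (Ioi 0) :=
  (integrableOn_Ioi_mul_exp_sub_mul hl C).mono' (by fun_prop)
    (ae_of_all _ fun t => norm_cexp_neg_mul_mul_le (hbd t))

lemma tendsto_cexp_neg_mul_mul_atTop (hbd : ∀ t, ‖f t‖ ≤ C * Real.exp (c * t)) (hl : c < l.re) :
    Tendsto (fun t : ℝ => cexp (-(l * t)) * f t) atTop (𝓝 0) := by
  have hexp : Tendsto (fun t => C * Real.exp ((c - l.re) * t)) atTop (𝓝 0) := by
    simpa using (Real.tendsto_exp_atBot.comp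
      (tendsto_id.const_mul_atTop_of_neg (sub_neg.mpr hl))).const_mul C
  exact squeeze_zero_norm (fun t => norm_cexp_neg_mul_mul_le (hbd t)) hexp

end ExponentialBound

lemma laplace_const_mul (b : ℂ) (f : ℝ → ℂ) (l : ℂ) :
    laplace (fun t => b * f t) l = b * laplace f l := by
  simp only [laplace, mul_left_comm _ b, MeasureTheory.integral_const_mul]

lemma laplace_sub {f g : ℝ → ℂ} {l : ℂ}
    (hf : IntegrableOn (fun t : ℝ => cexp (-(l * t)) * f t) (Ioi 0))
    (hg : IntegrableOn (fun t : ℝ => cexp (-(l * t)) * g t) (Ioi 0)) :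
    laplace (fun t => f t - g t) l = laplace f l - laplace g l := by
  simp only [laplace, mul_sub]
  exact integral_sub hf hg

lemma integral_mul_primitive_eq {𝕜 : Type*} [RCLike 𝕜] {f g : ℝ → 𝕜} {a b : ℝ} (hab : a ≤ b)
    (hf : IntervalIntegrable f volume a b) (hg : IntervalIntegrable g volume a b) :
    ∫ t in a..b, f t * ∫ s in a..t, g s = ∫ s in a..b, (∫ t in s..b, f t) * g s := by
  rw [intervalIntegrable_iff_integrableOn_Ioc_of_le hab] at hf hg
  set F : ℝ → ℝ → 𝕜 := fun t s =>
    {p : ℝ × ℝ | p.2 ≤ p.1}.indicator (fun p => f p.1 * g p.2) (t, s) with hF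
  have hFi : Integrable (Function.uncurry F)
      ((volume.restrict (Ioc a b)).prod (volume.restrict (Ioc a b))) :=
    (hf.mul_prod hg).indicator (measurableSet_le measurable_snd measurable_fst)
  have hleft : ∀ t ∈ Ioc a b, ∫ s in Ioc a b, F t s = f t * ∫ s in a..t, g s := by
    intro t ht
    have hFt : F t = (Iic t).indicator fun s => f t * g s := by
      ext s; simp [hF, indicator]
    rw [hFt, setIntegral_indicator measurableSet_Iic, Ioc_inter_Iic, min_eq_right ht.2,
      MeasureTheory.integral_const_mul, integral_of_le ht.1.le]
  have hright : ∀ s ∈ Ioc a b, ∫ t in Ioc a b, F t s = (∫ t in s..b, f t) * g s := by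
    intro s hs
    have hFs : (fun t => F t s) = (Ici s).indicator fun t => f t * g s := by
      ext t; simp [hF, indicator]
    have hIcc : Ioc a b ∩ Ici s = Icc s b :=
      Set.ext fun t => ⟨fun h => ⟨h.2, h.1.2⟩, fun h => ⟨⟨hs.1.trans_le h.1, h.2⟩, h.1⟩⟩
    rw [hFs, setIntegral_indicator measurableSet_Ici, hIcc, integral_Icc_eq_integral_Ioc,
      MeasureTheory.integral_mul_const, integral_of_le hs.2]
  simp only [integral_of_le hab]
  calc ∫ t in Ioc a b, f t * ∫ s in a..t, g s = ∫ t in Ioc a b, ∫ s in Ioc a b, F t s :=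
        setIntegral_congr_fun measurableSet_Ioc fun t ht => (hleft t ht).symm
    _ = ∫ s in Ioc a b, ∫ t in Ioc a b, F t s := integral_integral_swap hFi
    _ = ∫ s in Ioc a b, (∫ t in s..b, f t) * g s := setIntegral_congr_fun measurableSet_Ioc hright

lemma integral_mul_cexp_neg_mul (l : ℂ) (a b : ℝ) :
    ∫ t in a..b, l * cexp (-(l * t)) = cexp (-(l * a)) - cexp (-(l * b)) := by
  have hderiv (t : ℝ) : HasDerivAt (fun t : ℝ => -cexp (-(l * t))) (l * cexp (-(l * t))) t :=
    ((((hasDerivAt_id' t).ofReal_comp).const_mul l).fun_neg.cexp).fun_neg.congr_deriv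
      (by simp [mul_comm])
  rw [integral_eq_sub_of_hasDerivAt (fun t _ => hderiv t)
    (Continuous.intervalIntegrable (by fun_prop) a b)]
  ring

lemma mul_integral_cexp_neg_mul_eq {y g : ℝ → ℂ} {y₀ l : ℂ} {T : ℝ} (hT : 0 ≤ T)
    (hy : ∀ t ∈ Icc 0 T, y t = y₀ + ∫ s in (0 : ℝ)..t, g s)
    (hg : IntervalIntegrable g volume 0 T) :
    l * ∫ t in (0 : ℝ)..T, cexp (-(l * t)) * y t =
      y₀ - cexp (-(l * T)) * y T + ∫ s in (0 : ℝ)..T, cexp (-(l * s)) * g s := by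
  set e : ℝ → ℂ := fun t => cexp (-(l * t)) with he
  have he_cont : Continuous e := by fun_prop
  have hG : ContinuousOn (fun t => ∫ s in (0 : ℝ)..t, g s) (uIcc 0 T) :=
    continuousOn_primitive_interval' hg left_mem_uIcc
  have hlhs : l * ∫ t in (0 : ℝ)..T, e t * y t =
      ∫ t in (0 : ℝ)..T, y₀ * (l * e t) + (l * e t) * ∫ s in (0 : ℝ)..t, g s := by
    rw [← intervalIntegral.integral_const_mul]
    refine integral_congr fun t ht => ?_
    rw [uIcc_of_le hT] at ht
    simp only [hy t ht]
    ring
  have hswap : ∫ t in (0 : ℝ)..T, (l * e t) * ∫ s in (0 : ℝ)..t, g s =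
      (∫ s in (0 : ℝ)..T, e s * g s) - e T * ∫ s in (0 : ℝ)..T, g s := by
    rw [integral_mul_primitive_eq hT (Continuous.intervalIntegrable (by fun_prop) 0 T) hg,
      ← intervalIntegral.integral_const_mul, ← integral_sub
        (hg.continuousOn_mul he_cont.continuousOn) (hg.const_mul _)]
    refine integral_congr fun s _ => ?_
    simp only [he, integral_mul_cexp_neg_mul]
    ring
  rw [hlhs, integral_add (Continuous.intervalIntegrable (by fun_prop) 0 T)
      ((Continuous.intervalIntegrable (by fun_prop) 0 T).mul_continuousOn hG),
    intervalIntegral.integral_const_mul, integral_mul_cexp_neg_mul, hswap,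
    hy T (right_mem_Icc.mpr hT)]
  simp only [he, Complex.ofReal_zero, mul_zero, neg_zero, Complex.exp_zero]
  ring

lemma intervalIntegrable_of_integrableOn_cexp_neg_mul {g : ℝ → ℂ} {l : ℂ} {T : ℝ} (hT : 0 ≤ T)
    (hg : IntegrableOn (fun t : ℝ => cexp (-(l * t)) * g t) (Ioi 0)) :
    IntervalIntegrable g volume 0 T := by
  rw [intervalIntegrable_iff_integrableOn_Ioc_of_le hT]
  refine ((hg.mono_set Ioc_subset_Ioi_self).continuousOn_mul_of_subset
    (g := fun t : ℝ => cexp (l * t)) (by fun_prop) isCompact_Icc measurableSet_Ioc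
    Ioc_subset_Icc_self).congr_fun (fun t _ => ?_) measurableSet_Ioc
  dsimp only
  rw [← mul_assoc, ← Complex.exp_add, add_neg_cancel, Complex.exp_zero, one_mul]

theorem mul_laplace_eq_add_laplace {y g : ℝ → ℂ} {y₀ l : ℂ}
    (hy : ∀ t, 0 ≤ t → y t = y₀ + ∫ s in (0 : ℝ)..t, g s)
    (hyi : IntegrableOn (fun t : ℝ => cexp (-(l * t)) * y t) (Ioi 0))
    (hgi : IntegrableOn (fun t : ℝ => cexp (-(l * t)) * g t) (Ioi 0))
    (hlim : Tendsto (fun t : ℝ => cexp (-(l * t)) * y t) atTop (𝓝 0)) :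
    l * laplace y l = y₀ + laplace g l := by
  have hlhs := (intervalIntegral_tendsto_integral_Ioi 0 hyi tendsto_id).const_mul l
  have hrhs := ((tendsto_const_nhds (x := y₀)).sub hlim).add
    (intervalIntegral_tendsto_integral_Ioi 0 hgi tendsto_id)
  rw [sub_zero] at hrhs
  refine tendsto_nhds_unique hlhs (hrhs.congr' ?_)
  filter_upwards [eventually_ge_atTop 0] with T hT
  exact (mul_integral_cexp_neg_mul_eq hT (fun t ht => hy t ht.1)
    (intervalIntegrable_of_integrableOn_cexp_neg_mul hT hgi)).symm

section Delay

variable {f : ℝ → ℂ} {l : ℂ}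

lemma laplace_eq_integral (hf : ∀ t < 0, f t = 0) :
    laplace f l = ∫ t : ℝ, cexp (-(l * t)) * f t := by
  rw [laplace, ← integral_Ici_eq_integral_Ioi, setIntegral_eq_integral_of_forall_compl_eq_zero]
  intro t ht
  rw [hf t (not_le.mp ht), mul_zero]

lemma laplace_comp_add (hf : ∀ t < 0, f t = 0) {u : ℝ} (hu : u ≤ 0) :
    laplace (fun s => f (s + u)) l = cexp (l * u) * laplace f l := by
  rw [laplace_eq_integral fun t ht => hf _ (by linarith), laplace_eq_integral hf,
    ← MeasureTheory.integral_const_mul]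
  conv_rhs => rw [← integral_add_right_eq_self _ u]
  congr 1 with s
  rw [← mul_assoc, ← Complex.exp_add]
  push_cast
  ring_nf

variable {μ : Measure ℝ} [IsFiniteMeasure μ] {r C c : ℝ}

lemma norm_comp_add_le (hbd : ∀ t, ‖f t‖ ≤ C * Real.exp (c * t)) (s : ℝ) {u : ℝ}
    (hu : u ∈ Icc (-r) 0) : ‖f (s + u)‖ ≤ C * Real.exp (|c| * r) * Real.exp (c * s) := by
  have hC : 0 ≤ C := nonneg_of_mul_nonneg_left ((norm_nonneg _).trans (hbd 0)) (Real.exp_pos _)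
  have hcu : c * u ≤ |c| * r := by
    cases abs_cases c <;> nlinarith [hu.1, hu.2]
  calc ‖f (s + u)‖ ≤ C * Real.exp (c * (s + u)) := hbd _
    _ ≤ C * Real.exp (|c| * r + c * s) := by gcongr; linarith
    _ = C * Real.exp (|c| * r) * Real.exp (c * s) := by rw [Real.exp_add, mul_assoc]

lemma norm_integral_comp_add_le (hbd : ∀ t, ‖f t‖ ≤ C * Real.exp (c * t))
    (hμ : ∀ᵐ u ∂μ, u ∈ Icc (-r) 0) (s : ℝ) :
    ‖∫ u, f (s + u) ∂μ‖ ≤ C * Real.exp (|c| * r) * μ.real univ * Real.exp (c * s) := by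
  refine (norm_integral_le_of_norm_le_const (hμ.mono fun u hu => norm_comp_add_le hbd s hu)).trans
    (le_of_eq ?_)
  ring

lemma stronglyMeasurable_integral_comp_add (hf : Measurable f) :
    StronglyMeasurable fun s => ∫ u, f (s + u) ∂μ :=
  (hf.comp measurable_add).stronglyMeasurable.integral_prod_right'

lemma integrableOn_cexp_neg_mul_integral_comp_add (hf : Measurable f)
    (hbd : ∀ t, ‖f t‖ ≤ C * Real.exp (c * t)) (hμ : ∀ᵐ u ∂μ, u ∈ Icc (-r) 0) (hl : c < l.re) :
    IntegrableOn (fun s : ℝ => cexp (-(l * s)) * ∫ u, f (s + u) ∂μ) (Ioi 0) :=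
  integrableOn_cexp_neg_mul_mul (stronglyMeasurable_integral_comp_add hf).aestronglyMeasurable
    (norm_integral_comp_add_le hbd hμ) hl

theorem laplace_integral_comp_add (hf : Measurable f) (hf0 : ∀ t < 0, f t = 0)
    (hbd : ∀ t, ‖f t‖ ≤ C * Real.exp (c * t)) (hμ : ∀ᵐ u ∂μ, u ∈ Icc (-r) 0) (hl : c < l.re) :
    laplace (fun s => ∫ u, f (s + u) ∂μ) l = (∫ u, cexp (l * u) ∂μ) * laplace f l := by
  have hμ' : ∀ᵐ p ∂(volume.restrict (Ioi (0 : ℝ))).prod μ, p.2 ∈ Icc (-r) 0 :=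
    Measure.quasiMeasurePreserving_snd.ae hμ
  have hint : Integrable (Function.uncurry fun s u : ℝ => cexp (-(l * s)) * f (s + u))
      ((volume.restrict (Ioi (0 : ℝ))).prod μ) := by
    have hdom : Integrable (fun p : ℝ × ℝ => C * Real.exp (|c| * r) * Real.exp ((c - l.re) * p.1))
        ((volume.restrict (Ioi (0 : ℝ))).prod μ) := by
      simpa using (integrableOn_Ioi_mul_exp_sub_mul hl (C * Real.exp (|c| * r))).mul_prod
        (integrable_const (μ := μ) (1 : ℝ))
    refine hdom.mono' (by fun_prop) (hμ'.mono fun p hp => ?_)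
    exact norm_cexp_neg_mul_mul_le (f := fun s => f (s + p.2)) (norm_comp_add_le hbd p.1 hp)
  calc laplace (fun s => ∫ u, f (s + u) ∂μ) l
      = ∫ s in Ioi (0 : ℝ), ∫ u, cexp (-(l * s)) * f (s + u) ∂μ := by
        simp only [laplace, MeasureTheory.integral_const_mul]
    _ = ∫ u, laplace (fun s => f (s + u)) l ∂μ := integral_integral_swap hint
    _ = ∫ u, cexp (l * u) * laplace f l ∂μ :=
        integral_congr_ae (hμ.mono fun u hu => laplace_comp_add hf0 hu.2)
    _ = (∫ u, cexp (l * u) ∂μ) * laplace f l := integral_mul_const _ _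

end Delay

lemma ofReal_sInt (a : SignedMeasure ℝ) (s : Set ℝ) (f : ℝ → ℝ) :
    (sInt a s f : ℂ) = cInt a s fun u => f u := by
  simp only [sInt, cInt, Complex.ofReal_sub, integral_complex_ofReal]

section SignedDelay

variable {a : SignedMeasure ℝ} {f : ℝ → ℂ} {r C c : ℝ} {l : ℂ}

lemma integrableOn_cexp_neg_mul_cInt_comp_add (hf : Measurable f)
    (hbd : ∀ t, ‖f t‖ ≤ C * Real.exp (c * t)) (hl : c < l.re) :
    IntegrableOn (fun s : ℝ => cexp (-(l * s)) * cInt a (Icc (-r) 0) fun u => f (s + u))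
      (Ioi 0) := by
  simp only [cInt, mul_sub]
  exact (integrableOn_cexp_neg_mul_integral_comp_add hf hbd
    (ae_restrict_mem measurableSet_Icc) hl).sub
    (integrableOn_cexp_neg_mul_integral_comp_add hf hbd (ae_restrict_mem measurableSet_Icc) hl)

theorem laplace_cInt_comp_add (hf : Measurable f) (hf0 : ∀ t < 0, f t = 0)
    (hbd : ∀ t, ‖f t‖ ≤ C * Real.exp (c * t)) (hl : c < l.re) :
    laplace (fun s => cInt a (Icc (-r) 0) fun u => f (s + u)) l =
      cInt a (Icc (-r) 0) (fun u => cexp (l * u)) * laplace f l := by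
  have hpos : ∀ᵐ u ∂a.toJordanDecomposition.posPart.restrict (Icc (-r) 0), u ∈ Icc (-r) 0 :=
    ae_restrict_mem measurableSet_Icc
  have hneg : ∀ᵐ u ∂a.toJordanDecomposition.negPart.restrict (Icc (-r) 0), u ∈ Icc (-r) 0 :=
    ae_restrict_mem measurableSet_Icc
  simp only [cInt]
  rw [laplace_sub (integrableOn_cexp_neg_mul_integral_comp_add hf hbd hpos hl)
    (integrableOn_cexp_neg_mul_integral_comp_add hf hbd hneg hl),
    laplace_integral_comp_add hf hf0 hbd hpos hl, laplace_integral_comp_add hf hf0 hbd hneg hl,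
    sub_mul]

end SignedDelay

lemma measurable_of_continuousOn_Ici_of_eq_zero {x : ℝ → ℝ} {b : ℝ} (hxc : ContinuousOn x (Ici b))
    (hx0 : ∀ t < b, x t = 0) : Measurable x := by
  rw [← piecewise_same (s := Ici b) (f := x)]
  exact hxc.measurable_piecewise (continuousOn_const.congr fun t ht => hx0 t (not_le.mp ht))
    measurableSet_Ici

lemma norm_ofReal_le_mul_exp {x : ℝ → ℝ} {C c : ℝ} (hx0 : ∀ t < 0, x t = 0)
    (hbd : ∀ t, 0 ≤ t → |x t| ≤ C * Real.exp (c * t)) (t : ℝ) :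
    ‖(x t : ℂ)‖ ≤ C * Real.exp (c * t) := by
  rcases lt_or_ge t 0 with ht | ht
  · have hC : 0 ≤ C := by simpa using (abs_nonneg _).trans (hbd 0 le_rfl)
    rw [hx0 t ht, Complex.ofReal_zero, norm_zero]
    positivity
  · simpa using hbd t ht

theorem laplace_transform_of_fundamental_solution_general (r : ℝ)
    (a : SignedMeasure ℝ) (θ : ℝ)
    (x : ℝ → ℝ) (hxc : ContinuousOn x (Ici 0)) (hx0 : ∀ t : ℝ, t < 0 → x t = 0)
    (hxeq : ∀ t : ℝ, 0 ≤ t →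
      x t = 1 + θ * ∫ s in (0:ℝ)..t, sInt a (Icc (-r) 0) (fun u => x (s + u)))
    (C c : ℝ)
    (hbd : ∀ t : ℝ, 0 ≤ t → |x t| ≤ C * Real.exp (c * t)) :
    ∀ l : ℂ, c < l.re →
      hChar r θ a l ≠ 0 ∧
      (∫ t in Ioi (0:ℝ), Complex.exp (-(l * (t : ℂ))) * (x t : ℂ)) = 1 / hChar r θ a l := by
  intro l hl
  set y : ℝ → ℂ := fun t => x t
  have hy_meas : Measurable y :=
    Complex.measurable_ofReal.comp (measurable_of_continuousOn_Ici_of_eq_zero hxc hx0)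
  have hy0 : ∀ t < 0, y t = 0 := fun t ht => by simp [y, hx0 t ht]
  have hy_bd : ∀ t, ‖y t‖ ≤ C * Real.exp (c * t) := norm_ofReal_le_mul_exp hx0 hbd
  set G : ℝ → ℂ := fun s => cInt a (Icc (-r) 0) fun u => y (s + u)
  have hy_eq : ∀ t, 0 ≤ t → y t = 1 + ∫ s in (0:ℝ)..t, θ * G s := by
    intro t ht
    simp only [y, G, hxeq t ht, intervalIntegral.integral_const_mul, ← ofReal_sInt,
      intervalIntegral.integral_ofReal]
    push_cast
    ring
  have hkey : l * laplace y l = 1 + θ * laplace G l := by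
    rw [← laplace_const_mul (θ : ℂ)]
    exact mul_laplace_eq_add_laplace hy_eq
      (integrableOn_cexp_neg_mul_mul hy_meas.aestronglyMeasurable hy_bd hl)
      (by simpa only [IntegrableOn, mul_left_comm] using
        (integrableOn_cexp_neg_mul_cInt_comp_add hy_meas hy_bd hl).const_mul (θ : ℂ))
      (tendsto_cexp_neg_mul_mul_atTop hy_bd hl)
  have hmain : hChar r θ a l * laplace y l = 1 := by
    rw [hChar]
    linear_combination hkey + θ * laplace_cInt_comp_add hy_meas hy0 hy_bd hl
  exact ⟨left_ne_zero_of_mul_eq_one hmain, eq_one_div_of_mul_eq_one_right hmain⟩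

/-- If the fundamental solution satisfies `|x(t)| ≤ C e^{ct}`, then for every `λ` with
`Re λ > c` the characteristic function does not vanish and the Laplace transform of `x`
equals `1 / h_θ(λ)`. -/
theorem laplace_transform_of_fundamental_solution (r : ℝ) (hr : 0 < r)
    (a : SignedMeasure ℝ) (ha : a.totalVariation (Icc (-r) 0)ᶜ = 0) (θ : ℝ)
    (x : ℝ → ℝ) (hxc : ContinuousOn x (Ici 0)) (hx0 : ∀ t : ℝ, t < 0 → x t = 0)
    (hxeq : ∀ t : ℝ, 0 ≤ t →
      x t = 1 + θ * ∫ s in (0:ℝ)..t, sInt a (Icc (-r) 0) (fun u => x (s + u)))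
    (C c : ℝ) (hC : 0 < C)
    (hbd : ∀ t : ℝ, 0 ≤ t → |x t| ≤ C * Real.exp (c * t)) :
    ∀ l : ℂ, c < l.re →
      hChar r θ a l ≠ 0 ∧
      (∫ t in Ioi (0:ℝ), Complex.exp (-(l * (t : ℂ))) * (x t : ℂ)) = 1 / hChar r θ a l :=
  laplace_transform_of_fundamental_solution_general r a θ x hxc hx0 hxeq C c hbd
end

section
/- Let r > 0, let a be a finite signed measure on [-r, 0] with a ≠ 0, let θ ∈ ℝ, and let x : [0, ∞) → ℝ be the fundamental solution, i.e., the continuous function satisfying x(t) = 1 + θ ∫_0^t ∫_{[-r,0]} x̃(s+u) a(du) ds for all t ≥ 0, where x̃ extends x by 0 on (-∞, 0). Then the function y(t) = ∫_{[-r,0]} x̃(t + u) a(du), t ≥ 0, is not identically zero: there exists t ≥ 0 with y(t) ≠ 0. -/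
open MeasureTheory Set Filter intervalIntegral

/-- If `a ≠ 0` and `x` is the fundamental solution, then
`y(t) = ∫_{[-r,0]} x(t+u) a(du)` is not identically zero on `[0, ∞)`. -/
theorem y_not_identically_zero (r : ℝ) (hr : 0 < r)
    (a : SignedMeasure ℝ) (ha : a.totalVariation (Icc (-r) 0)ᶜ = 0) (hane : a ≠ 0)
    (θ : ℝ)
    (x : ℝ → ℝ) (hxc : ContinuousOn x (Ici 0)) (hx0 : ∀ t : ℝ, t < 0 → x t = 0)
    (hxeq : ∀ t : ℝ, 0 ≤ t →
      x t = 1 + θ * ∫ s in (0:ℝ)..t, sInt a (Icc (-r) 0) (fun u => x (s + u))) :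
    ∃ t : ℝ, 0 ≤ t ∧ sInt a (Icc (-r) 0) (fun u => x (t + u)) ≠ 0 := by
  by_contra hcon
  push_neg at hcon
  set μ := a.toJordanDecomposition.posPart with hμdef
  set ν := a.toJordanDecomposition.negPart with hνdef
  -- Step 1: x = 1 on [0, ∞)
  have hx1 : ∀ t : ℝ, 0 ≤ t → x t = 1 := by
    intro t ht
    have hz : ∫ s in (0:ℝ)..t, sInt a (Icc (-r) 0) (fun u => x (s + u)) = 0 := by
      have heq : EqOn (fun s => sInt a (Icc (-r) 0) (fun u => x (s + u)))
          (fun _ => (0:ℝ)) (uIcc 0 t) := by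
        intro s hs
        rw [uIcc_of_le ht] at hs
        exact hcon s hs.1
      rw [intervalIntegral.integral_congr heq, intervalIntegral.integral_zero]
    rw [hxeq t ht, hz, mul_zero, add_zero]
  -- Step 2: the integrand is an indicator
  have hind : ∀ t : ℝ, 0 ≤ t →
      (fun u => x (t + u)) = (Ici (-t)).indicator (fun _ => (1:ℝ)) := by
    intro t ht
    funext u
    by_cases hu : u ∈ Ici (-t)
    · rw [indicator_of_mem hu]
      exact hx1 _ (by have := mem_Ici.mp hu; linarith)
    · rw [indicator_of_notMem hu]
      have : u < -t := not_le.mp hu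
      exact hx0 _ (by linarith)
  -- Step 3: key measure equality
  have hK : ∀ t : ℝ, 0 ≤ t →
      μ (Icc (-r) 0 ∩ Ici (-t)) = ν (Icc (-r) 0 ∩ Ici (-t)) := by
    intro t ht
    have h0 := hcon t ht
    rw [sInt, hind t ht] at h0
    rw [setIntegral_indicator measurableSet_Ici, setIntegral_indicator measurableSet_Ici,
        setIntegral_const, setIntegral_const] at h0
    simp only [smul_eq_mul, mul_one] at h0
    exact (ENNReal.toReal_eq_toReal_iff' (measure_ne_top μ _) (measure_ne_top ν _)).mp
      (sub_eq_zero.mp h0)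
  -- Step 4: both parts vanish outside Icc (-r) 0
  have hac : μ (Icc (-r) 0)ᶜ + ν (Icc (-r) 0)ᶜ = 0 := by
    have h := ha
    unfold SignedMeasure.totalVariation at h
    rwa [Measure.add_apply] at h
  have hμc : μ (Icc (-r) 0)ᶜ = 0 := (add_eq_zero.mp hac).1
  have hνc : ν (Icc (-r) 0)ᶜ = 0 := (add_eq_zero.mp hac).2
  -- Step 5: equality on Icc (-r) 0 ∩ Ioi s for all s
  have hIoi : ∀ s : ℝ, μ (Icc (-r) 0 ∩ Ioi s) = ν (Icc (-r) 0 ∩ Ioi s) := by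
    intro s
    set A : ℕ → Set ℝ := fun n => Icc (-r) 0 ∩ Ici (s + 1 / (n + 1)) with hA
    have hmono : Monotone A := by
      intro m n hmn
      apply inter_subset_inter_right
      apply Ici_subset_Ici.mpr
      have h1 : (0:ℝ) < m + 1 := by positivity
      have h2 : (m:ℝ) + 1 ≤ n + 1 := by
        have := (Nat.cast_le (α := ℝ)).mpr hmn
        linarith
      have := one_div_le_one_div_of_le h1 h2
      linarith
    have hUnion : ⋃ n, A n = Icc (-r) 0 ∩ Ioi s := by
      ext u
      simp only [hA, mem_iUnion, mem_inter_iff, mem_Icc, mem_Ici, mem_Ioi]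
      constructor
      · rintro ⟨n, h1, h2⟩
        have : (0:ℝ) < 1 / (n + 1) := by positivity
        exact ⟨h1, by linarith⟩
      · rintro ⟨h1, h2⟩
        obtain ⟨n, hn⟩ := exists_nat_one_div_lt (sub_pos.mpr h2)
        exact ⟨n, h1, by linarith⟩
    have hAn : ∀ n, μ (A n) = ν (A n) := by
      intro n
      by_cases hn : s + 1 / (n + 1 : ℝ) ≤ 0
      · have := hK (-(s + 1 / (n + 1))) (by linarith)
        simpa [hA, neg_neg] using this
      · have hempty : A n = ∅ := by
          apply eq_empty_of_forall_notMem
          rintro u ⟨hu1, hu2⟩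
          rw [mem_Icc] at hu1
          rw [mem_Ici] at hu2
          push_neg at hn
          linarith [hu1.2]
        simp [hempty]
    rw [← hUnion, hmono.measure_iUnion, hmono.measure_iUnion]
    exact iSup_congr hAn
  -- total mass equality
  have hIcc : μ (Icc (-r) 0) = ν (Icc (-r) 0) := by
    have h := hK r hr.le
    rwa [inter_eq_left.mpr (fun u hu => hu.1)] at h
  -- Step 6: equality on all Iic s
  have hIic : ∀ s : ℝ, μ (Iic s) = ν (Iic s) := by
    intro s
    have key : ∀ m : Measure ℝ, m (Icc (-r) 0)ᶜ = 0 →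
        m (Iic s) + m (Icc (-r) 0 ∩ Ioi s) = m (Icc (-r) 0) := by
      intro m hm
      have h1 : m (Iic s) = m (Iic s ∩ Icc (-r) 0) := by
        have := measure_inter_add_diff (μ := m) (t := Icc (-r) 0) (Iic s) measurableSet_Icc
        have h0 : m (Iic s \ Icc (-r) 0) = 0 :=
          measure_mono_null (diff_subset_compl _ _) hm
        rw [h0, add_zero] at this
        exact this.symm
      have h2 : m (Icc (-r) 0 ∩ Ioi s) + m (Icc (-r) 0 \ Ioi s) = m (Icc (-r) 0) :=
        measure_inter_add_diff (μ := m) (t := Ioi s) (Icc (-r) 0) measurableSet_Ioi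
      have h3 : Icc (-r) 0 \ Ioi s = Iic s ∩ Icc (-r) 0 := by
        rw [diff_eq, compl_Ioi, inter_comm]
      rw [h3, ← h1, add_comm] at h2
      exact h2
    have hμs := key μ hμc
    have hνs := key ν hνc
    rw [hIcc, ← hνs, hIoi s] at hμs
    rw [add_comm (μ (Iic s)), add_comm (ν (Iic s))] at hμs
    exact (ENNReal.add_right_inj (measure_ne_top ν _)).mp hμs
  have hμν : μ = ν := MeasureTheory.Measure.ext_of_Iic μ ν hIic
  apply hane
  rw [← a.toSignedMeasure_toJordanDecomposition]
  show μ.toSignedMeasure - ν.toSignedMeasure = 0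
  simp only [hμν, sub_self]
end
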